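/- Under the same hypotheses, the trilinear form (X,Y,Z) ↦ g(C_{JX} Y, Z) is also fully symmetric in X, Y, Z. -/

import Mathlib

/-!
Since `C` is symmetric in its two arguments, anticommutation with `J` gives
`C_{JX} Y = -J (C_X Y)`; skewness of `J` then moves `J` across `g` onto `Z`, turning the
claimed symmetry into that of `(X, Y, Z) ↦ g(C_X Y, Z)`.
-/

section

variable {R V : Type*} [CommRing R] [AddCommGroup V] [Module R V]

theorem LinearMap.apply_apply_left_eq_neg_of_anticomm {J : V →ₗ[R] V} {C : V →ₗ[R] V →ₗ[R] V}
    (hanti : ∀ X : V, C X ∘ₗ J = -(J ∘ₗ C X)) (hCsymm : ∀ X Y : V, C X Y = C Y X) (X Y : V) :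
    C (J X) Y = -J (C X Y) := by
  have h : C Y (J X) = -J (C Y X) := LinearMap.congr_fun (hanti Y) X
  rw [hCsymm, h, hCsymm]

namespace LinearMap.BilinForm

theorem apply_swap_of_isSymm {g : LinearMap.BilinForm R V} (hsymm : g.IsSymm)
    {A : V →ₗ[R] V} (hA : ∀ Y Z : V, g (A Y) Z = g Y (A Z)) (Y Z : V) :
    g (A Y) Z = g (A Z) Y := by
  rw [hA, hsymm.eq]

theorem apply_apply_left_swap {g : LinearMap.BilinForm R V} (hsymm : g.IsSymm)
    {J : V →ₗ[R] V} (hJskew : ∀ X Y : V, g (J X) Y = -g X (J Y))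
    {C : V →ₗ[R] V →ₗ[R] V} (hCsym : ∀ X Y Z : V, g (C X Y) Z = g Y (C X Z))
    (hanti : ∀ X : V, C X ∘ₗ J = -(J ∘ₗ C X)) (hCsymm : ∀ X Y : V, C X Y = C Y X)
    (X Y Z : V) : g (C (J X) Y) Z = g (C (J Z) Y) X :=
  calc g (C (J X) Y) Z = g (C X Y) (J Z) := by
        rw [apply_apply_left_eq_neg_of_anticomm hanti hCsymm, map_neg, LinearMap.neg_apply,
          hJskew, neg_neg]
    _ = g Y (C (J Z) X) := by rw [hCsym, hCsymm X]
    _ = g (C (J Z) Y) X := by rw [hCsym, hsymm.eq]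

end LinearMap.BilinForm

end

open LinearMap LinearMap.BilinForm in
theorem stmt_4_general {V : Type*} [AddCommGroup V] [Module ℝ V]
    (g : LinearMap.BilinForm ℝ V) (hsymm : g.IsSymm)
    (J : V →ₗ[ℝ] V)
    (hJskew : ∀ X Y : V, g (J X) Y = - g X (J Y))
    (C : V →ₗ[ℝ] V →ₗ[ℝ] V)
    (hCsym : ∀ X Y Z : V, g (C X Y) Z = g Y (C X Z))
    (hanti : ∀ X : V, (C X) ∘ₗ J = -(J ∘ₗ C X))
    (hCsymm : ∀ X Y : V, C X Y = C Y X) :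
    ∀ X Y Z : V, g (C (J X) Y) Z = g (C (J Y) X) Z ∧
      g (C (J X) Y) Z = g (C (J X) Z) Y ∧
      g (C (J X) Y) Z = g (C (J Z) Y) X := by
  intro X Y Z
  refine ⟨?_, apply_swap_of_isSymm hsymm (hCsym (J X)) Y Z,
    apply_apply_left_swap hsymm hJskew hCsym hanti hCsymm X Y Z⟩
  rw [apply_apply_left_eq_neg_of_anticomm hanti hCsymm,
    apply_apply_left_eq_neg_of_anticomm hanti hCsymm, hCsymm]

/-- Under the same hypotheses as before (`g` nondegenerate symmetric, `J` `g`-skew with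
`J² = ε Id`, `C_X` `g`-symmetric, anticommuting with `J`, `C_X Y = C_Y X`),
the trilinear form `(X,Y,Z) ↦ g(C_{JX} Y, Z)` is also fully symmetric in `X, Y, Z`. -/
theorem stmt_4 {V : Type*} [AddCommGroup V] [Module ℝ V] [FiniteDimensional ℝ V]
    (g : LinearMap.BilinForm ℝ V) (hnd : g.Nondegenerate) (hsymm : g.IsSymm)
    (ε : ℝ) (hε : ε = 1 ∨ ε = -1)
    (J : V →ₗ[ℝ] V) (hJ2 : J ∘ₗ J = ε • LinearMap.id)
    (hJskew : ∀ X Y : V, g (J X) Y = - g X (J Y))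
    (C : V →ₗ[ℝ] V →ₗ[ℝ] V)
    (hCsym : ∀ X Y Z : V, g (C X Y) Z = g Y (C X Z))
    (hanti : ∀ X : V, (C X) ∘ₗ J = -(J ∘ₗ C X))
    (hCsymm : ∀ X Y : V, C X Y = C Y X) :
    ∀ X Y Z : V, g (C (J X) Y) Z = g (C (J Y) X) Z ∧
      g (C (J X) Y) Z = g (C (J X) Z) Y ∧
      g (C (J X) Y) Z = g (C (J Z) Y) X :=
  stmt_4_general g hsymm J hJskew C hCsym hanti hCsymm
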